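/- For any two directed hypergraphs H1 and H2, the 2-section of their Cartesian product equals the Cartesian (graph) product of their 2-sections: [H1□H2]_2 = [H1]_2 □ [H2]_2 (as graphs on the vertex set V(H1)×V(H2)). -/

import Mathlib

structure DiHypergraph (V : Type) where
  arcs : Set (Set V × Set V)
  tail_nonempty : ∀ e ∈ arcs, (Prod.fst e).Nonempty
  head_nonempty : ∀ e ∈ arcs, (Prod.snd e).Nonempty

namespace DiHypergraph

variable {V V1 V2 V3 : Type}

/-- The set of vertices of an arc. -/
def verts (e : Set V × Set V) : Set V := e.1 ∪ e.2

/-- Cartesian product of directed hypergraphs. -/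
def prod (H1 : DiHypergraph V1) (H2 : DiHypergraph V2) : DiHypergraph (V1 × V2) where
  arcs := {e | (∃ x : V1, ∃ f ∈ H2.arcs,
                 e = ((fun y => (x, y)) '' f.1, (fun y => (x, y)) '' f.2)) ∨
               (∃ y : V2, ∃ f ∈ H1.arcs,
                 e = ((fun x => (x, y)) '' f.1, (fun x => (x, y)) '' f.2))}
  tail_nonempty := by
    rintro e (⟨x, f, hf, rfl⟩ | ⟨y, f, hf, rfl⟩)
    · exact (H2.tail_nonempty f hf).image _
    · exact (H1.tail_nonempty f hf).image _
  head_nonempty := by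
    rintro e (⟨x, f, hf, rfl⟩ | ⟨y, f, hf, rfl⟩)
    · exact (H2.head_nonempty f hf).image _
    · exact (H1.head_nonempty f hf).image _

/-- Two vertices are weakly adjacent if they lie in a common arc. -/
def adj (H : DiHypergraph V) (x y : V) : Prop :=
  ∃ e ∈ H.arcs, x ∈ verts e ∧ y ∈ verts e

/-- Weak connectivity: any two vertices joined by a weak path. -/
def Connected (H : DiHypergraph V) : Prop :=
  Nonempty V ∧ ∀ x y : V, Relation.ReflTransGen H.adj x y

/-- `φ` is an isomorphism of directed hypergraphs. -/
def IsIsoVia (H1 : DiHypergraph V1) (H2 : DiHypergraph V2) (φ : V1 ≃ V2) : Prop :=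
  ∀ t h : Set V1, (t, h) ∈ H1.arcs ↔ (φ '' t, φ '' h) ∈ H2.arcs

/-- Isomorphy of directed hypergraphs. -/
def Iso (H1 : DiHypergraph V1) (H2 : DiHypergraph V2) : Prop :=
  ∃ φ : V1 ≃ V2, IsIsoVia H1 H2 φ

/-- Cartesian product of a family of directed hypergraphs. -/
def piProd {I : Type} {Vf : I → Type} (Hf : ∀ i, DiHypergraph (Vf i)) :
    DiHypergraph (∀ i, Vf i) where
  arcs := {e | ∃ (i : I) (f : Set (Vf i) × Set (Vf i)), f ∈ (Hf i).arcs ∧ ∃ base : ∀ j, Vf j,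
      e.1 = {v | v i ∈ f.1 ∧ ∀ j, j ≠ i → v j = base j} ∧
      e.2 = {v | v i ∈ f.2 ∧ ∀ j, j ≠ i → v j = base j}}
  tail_nonempty := by
    classical
    rintro e ⟨i, f, hf, base, h1, h2⟩
    obtain ⟨x, hx⟩ := (Hf i).tail_nonempty f hf
    refine ⟨Function.update base i x, ?_⟩
    rw [h1]
    exact ⟨by simpa using hx, fun j hj => Function.update_of_ne hj _ _⟩
  head_nonempty := by
    classical
    rintro e ⟨i, f, hf, base, h1, h2⟩
    obtain ⟨x, hx⟩ := (Hf i).head_nonempty f hf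
    refine ⟨Function.update base i x, ?_⟩
    rw [h2]
    exact ⟨by simpa using hx, fun j hj => Function.update_of_ne hj _ _⟩

/-- The 2-section of a directed hypergraph. -/
def twoSection (H : DiHypergraph V) : SimpleGraph V where
  Adj x y := x ≠ y ∧ ∃ e ∈ H.arcs, x ∈ verts e ∧ y ∈ verts e
  symm := ⟨by rintro x y ⟨hxy, e, he, hx, hy⟩; exact ⟨hxy.symm, e, he, hy, hx⟩⟩
  loopless := ⟨fun x h => h.1 rfl⟩

/-- Cartesian product of a family of simple graphs. -/
def piGraph {I : Type} {Vf : I → Type} (Gf : ∀ i, SimpleGraph (Vf i)) :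
    SimpleGraph (∀ i, Vf i) where
  Adj x y := ∃ i, (Gf i).Adj (x i) (y i) ∧ ∀ j, j ≠ i → x j = y j
  symm := ⟨by rintro x y ⟨i, h, hj⟩; exact ⟨i, h.symm, fun j hji => (hj j hji).symm⟩⟩
  loopless := ⟨by rintro x ⟨i, h, -⟩; exact (Gf i).loopless.irrefl _ h⟩

/-- All vertices of the arc `e` agree in every coordinate except possibly `i`. -/
def diffOnly {I : Type} {l : I → ℕ} (Υ : V ≃ ∀ i, Fin (l i)) (e : Set V × Set V) (i : I) :
    Prop :=
  ∀ x ∈ verts e, ∀ y ∈ verts e, ∀ j, j ≠ i → Υ x j = Υ y j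

/-- Cyclic increment of the `i`-th coordinate of a vertex. -/
def incV {I : Type} [DecidableEq I] {l : I → ℕ} [∀ i, NeZero (l i)]
    (Υ : V ≃ ∀ i, Fin (l i)) (i : I) (v : V) : V :=
  Υ.symm (Function.update (Υ v) i (Υ v i + 1))

/-- Increment of an arc. -/
def incArc {I : Type} [DecidableEq I] {l : I → ℕ} [∀ i, NeZero (l i)]
    (Υ : V ≃ ∀ i, Fin (l i)) (i : I) (e : Set V × Set V) : Set V × Set V :=
  (incV Υ i '' e.1, incV Υ i '' e.2)

/-- A pre-coordinatization: a coordinatization of the 2-section. -/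
def IsPreCoord {I : Type} {l : I → ℕ} (H : DiHypergraph V) (Υ : V ≃ ∀ i, Fin (l i)) : Prop :=
  ∃ Gf : ∀ i, SimpleGraph (Fin (l i)),
    ∀ x y : V, (twoSection H).Adj x y ↔ (piGraph Gf).Adj (Υ x) (Υ y)

/-- A coordinatization: an isomorphism to a Cartesian product of directed hypergraphs. -/
def IsCoord {I : Type} {l : I → ℕ} (H : DiHypergraph V)
    (Υ : V ≃ ∀ i, Fin (l i)) : Prop :=
  ∃ Hf : ∀ i, DiHypergraph (Fin (l i)), IsIsoVia H (piProd Hf) Υ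

/-- A directed hypergraph is prime w.r.t. the Cartesian product. -/
def IsPrime (H : DiHypergraph V) : Prop :=
  (∃ x y : V, x ≠ y) ∧
  ¬ ∃ (α β : Type) (H1 : DiHypergraph α) (H2 : DiHypergraph β),
      (∃ a a' : α, a ≠ a') ∧ (∃ b b' : β, b ≠ b') ∧ Iso H (H1.prod H2)

/-- The rank of a directed hypergraph. -/
noncomputable def rank (H : DiHypergraph V) : ℕ :=
  sSup ((fun e => (verts e).ncard) '' H.arcs)

/-- The one-vertex hypergraph without arcs. -/
def unitHG : DiHypergraph Unit where
  arcs := ∅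
  tail_nonempty := by simp
  head_nonempty := by simp

end DiHypergraph

/-- A simple graph is prime w.r.t. the Cartesian graph product. -/
def SimpleGraph.IsPrimeCart {α : Type} (G : SimpleGraph α) : Prop :=
  (∃ x y : α, x ≠ y) ∧
  ¬ ∃ (β γ : Type) (G1 : SimpleGraph β) (G2 : SimpleGraph γ),
      (∃ b b' : β, b ≠ b') ∧ (∃ c c' : γ, c ≠ c') ∧ Nonempty (G ≃g G1.boxProd G2)

namespace DiHypergraph

variable {V W V1 V2 : Type}

theorem twoSection_adj {H : DiHypergraph V} {x y : V} :
    (twoSection H).Adj x y ↔ x ≠ y ∧ H.adj x y :=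
  Iff.rfl

theorem verts_image (g : V → W) (e : Set V × Set V) :
    verts (g '' e.1, g '' e.2) = g '' verts e :=
  (Set.image_union g e.1 e.2).symm

theorem prod_adj_iff {H1 : DiHypergraph V1} {H2 : DiHypergraph V2} {x y : V1 × V2} :
    (H1.prod H2).adj x y ↔ H1.adj x.1 y.1 ∧ x.2 = y.2 ∨ x.1 = y.1 ∧ H2.adj x.2 y.2 := by
  obtain ⟨x1, x2⟩ := x
  obtain ⟨y1, y2⟩ := y
  constructor
  · rintro ⟨e, (⟨x, f, hf, rfl⟩ | ⟨y, f, hf, rfl⟩), hx, hy⟩ <;>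
      rw [verts_image] at hx hy <;>
      obtain ⟨a, ha, hax⟩ := hx <;> obtain ⟨b, hb, hby⟩ := hy <;>
      simp only [Prod.mk.injEq] at hax hby
    · obtain ⟨rfl, rfl⟩ := hax
      obtain ⟨rfl, rfl⟩ := hby
      exact Or.inr ⟨rfl, f, hf, ha, hb⟩
    · obtain ⟨rfl, rfl⟩ := hax
      obtain ⟨rfl, rfl⟩ := hby
      exact Or.inl ⟨⟨f, hf, ha, hb⟩, rfl⟩
  · rintro (⟨⟨f, hf, hx, hy⟩, rfl : x2 = y2⟩ | ⟨rfl : x1 = y1, f, hf, hx, hy⟩)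
    · refine ⟨_, Or.inr ⟨x2, f, hf, rfl⟩, ?_, ?_⟩ <;> rw [verts_image]
      exacts [⟨x1, hx, rfl⟩, ⟨y1, hy, rfl⟩]
    · refine ⟨_, Or.inl ⟨x1, f, hf, rfl⟩, ?_, ?_⟩ <;> rw [verts_image]
      exacts [⟨x2, hx, rfl⟩, ⟨y2, hy, rfl⟩]

end DiHypergraph

open DiHypergraph in
theorem twoSection_prod {V1 V2 : Type} (H1 : DiHypergraph V1) (H2 : DiHypergraph V2) :
    twoSection (H1.prod H2) = (twoSection H1).boxProd (twoSection H2) := by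
  ext ⟨x1, x2⟩ ⟨y1, y2⟩
  simp only [twoSection_adj, prod_adj_iff, SimpleGraph.boxProd_adj, ne_eq, Prod.mk.injEq]
  tauto
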